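/- Attainment of the optimal conditioning state: let ρ_AB be a density operator on H_A ⊗ H_B (separable) with Λ(ρ_AB|B) := inf{tr σ̃_B : σ̃_B positive trace class, id_A ⊗ σ̃_B ≥ ρ_AB} finite. Then the infimum is attained: there exists a positive trace-class σ̃_B with id_A ⊗ σ̃_B ≥ ρ_AB and tr σ̃_B = Λ(ρ_AB|B). -/

import Mathlib

open scoped InnerProductSpace ComplexOrder
open ContinuousLinearMap Filter Topology

set_option synthInstance.maxHeartbeats 1000000
set_option maxHeartbeats 1600000

noncomputable section

/-- The rank-one operator `|x⟩⟨y|`. -/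
def dyad {H : Type*} [NormedAddCommGroup H] [InnerProductSpace ℂ H] (x y : H) :
    H →L[ℂ] H := (innerSL ℂ y).smulRight x

/-- The trace of an operator along a Hilbert basis (sum of real parts of the diagonal). -/
def trAlong {H : Type*} [NormedAddCommGroup H] [InnerProductSpace ℂ H] {ι : Type*}
    (e : HilbertBasis ι ℂ H) (T : H →L[ℂ] H) : ℝ :=
  ∑' i, RCLike.re ⟪e i, T (e i)⟫_ℂ

/-- The complex trace of an operator along a Hilbert basis. -/
def trCAlong {H : Type*} [NormedAddCommGroup H] [InnerProductSpace ℂ H] {ι : Type*}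
    (e : HilbertBasis ι ℂ H) (T : H →L[ℂ] H) : ℂ :=
  ∑' i, ⟪e i, T (e i)⟫_ℂ

/-- The absolute value `√(T†T)` of a bounded operator. -/
def absOp {H : Type*} [NormedAddCommGroup H] [InnerProductSpace ℂ H] [CompleteSpace H]
    (T : H →L[ℂ] H) : H →L[ℂ] H := CFC.sqrt (ContinuousLinearMap.adjoint T * T)

/-- The trace norm `‖T‖₁ = tr √(T†T)` along a Hilbert basis. -/
def trNormAlong {H : Type*} [NormedAddCommGroup H] [InnerProductSpace ℂ H] [CompleteSpace H]
    {ι : Type*} (e : HilbertBasis ι ℂ H) (T : H →L[ℂ] H) : ℝ :=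
  trAlong e (absOp T)

/-- `T` is trace class (w.r.t. the Hilbert basis `e`): the diagonal sum of `√(T†T)` converges. -/
def IsTraceClass {H : Type*} [NormedAddCommGroup H] [InnerProductSpace ℂ H] [CompleteSpace H]
    {ι : Type*} (e : HilbertBasis ι ℂ H) (T : H →L[ℂ] H) : Prop :=
  Summable fun i => RCLike.re ⟪e i, absOp T (e i)⟫_ℂ

/-- An orthogonal projection: a self-adjoint idempotent bounded operator. -/
def IsOrthoProj {H : Type*} [NormedAddCommGroup H] [InnerProductSpace ℂ H] [CompleteSpace H]
    (P : H →L[ℂ] H) : Prop := IsSelfAdjoint P ∧ IsIdempotentElem P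

/-- A realization of the Hilbert-space tensor product `H = H_A ⊗ H_B`: a bilinear map
`tmul` compatible with the inner products, with total range, together with the induced
tensor product `map` of bounded operators. -/
structure HilbertTensor (HA HB H : Type*) [NormedAddCommGroup HA] [InnerProductSpace ℂ HA]
    [NormedAddCommGroup HB] [InnerProductSpace ℂ HB]
    [NormedAddCommGroup H] [InnerProductSpace ℂ H] where
  tmul : HA →ₗ[ℂ] HB →ₗ[ℂ] H
  inner_tmul : ∀ (a a' : HA) (b b' : HB),
    ⟪tmul a b, tmul a' b'⟫_ℂ = ⟪a, a'⟫_ℂ * ⟪b, b'⟫_ℂ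
  dense_span : Dense ((Submodule.span ℂ {z : H | ∃ a b, z = tmul a b} : Submodule ℂ H) : Set H)
  map : (HA →L[ℂ] HA) → (HB →L[ℂ] HB) → (H →L[ℂ] H)
  map_tmul : ∀ (S : HA →L[ℂ] HA) (T : HB →L[ℂ] HB) (a : HA) (b : HB),
    map S T (tmul a b) = tmul (S a) (T b)

/-- `Λ(ρ_AB|B) = inf { tr σ̃ : σ̃ ≥ 0 trace class, id_A ⊗ σ̃ ≥ ρ_AB }`, valued in `EReal`
(the infimum of the empty set being `⊤`, i.e. `H_min = -∞`). -/
def LamB {HA HB H : Type*} [NormedAddCommGroup HA] [InnerProductSpace ℂ HA]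
    [NormedAddCommGroup HB] [InnerProductSpace ℂ HB] [CompleteSpace HB]
    [NormedAddCommGroup H] [InnerProductSpace ℂ H] [CompleteSpace H]
    (TP : HilbertTensor HA HB H) {κ : Type*} (f : HilbertBasis κ ℂ HB)
    (ρ : H →L[ℂ] H) : EReal :=
  sInf {x : EReal | ∃ σ : HB →L[ℂ] HB, σ.IsPositive ∧ IsTraceClass f σ ∧
    ρ ≤ TP.map 1 σ ∧ x = (trAlong f σ : EReal)}

/-- `Λ(ρ_AB|σ_B) = inf { λ ∈ ℝ : λ·(id_A ⊗ σ_B) ≥ ρ_AB }`, valued in `EReal`. -/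
def LamCond {HA HB H : Type*} [NormedAddCommGroup HA] [InnerProductSpace ℂ HA]
    [NormedAddCommGroup HB] [InnerProductSpace ℂ HB]
    [NormedAddCommGroup H] [InnerProductSpace ℂ H] [CompleteSpace H]
    (TP : HilbertTensor HA HB H) (ρ : H →L[ℂ] H) (σ : HB →L[ℂ] HB) : EReal :=
  sInf {x : EReal | ∃ l : ℝ, x = (l : EReal) ∧ ρ ≤ l • TP.map 1 σ}

/-- The generalized fidelity `F̄(ρ,σ) = ‖√ρ√σ‖₁ + √((1-tr ρ)(1-tr σ))`. -/
def genFid {H : Type*} [NormedAddCommGroup H] [InnerProductSpace ℂ H] [CompleteSpace H]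
    {ι : Type*} (e : HilbertBasis ι ℂ H) (ρ σ : H →L[ℂ] H) : ℝ :=
  trNormAlong e (CFC.sqrt ρ * CFC.sqrt σ) +
    Real.sqrt ((1 - trAlong e ρ) * (1 - trAlong e σ))

/-- The purified distance `P(ρ,σ) = √(1 - F̄(ρ,σ)²)`. -/
def purifiedDist {H : Type*} [NormedAddCommGroup H] [InnerProductSpace ℂ H] [CompleteSpace H]
    {ι : Type*} (e : HilbertBasis ι ℂ H) (ρ σ : H →L[ℂ] H) : ℝ :=
  Real.sqrt (1 - (genFid e ρ σ) ^ 2)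

/-- Positivity of a square matrix of operators, viewed as an operator on `Hⁿ`. -/
def MatPos {H : Type*} [NormedAddCommGroup H] [InnerProductSpace ℂ H] (n : ℕ)
    (M : Matrix (Fin n) (Fin n) (H →L[ℂ] H)) : Prop :=
  ∀ v : Fin n → H, 0 ≤ ∑ i, ∑ j, ⟪v i, M i j (v j)⟫_ℂ

/-- Complete positivity of a linear map on operators. -/
def IsCPMap {H : Type*} [NormedAddCommGroup H] [InnerProductSpace ℂ H]
    (E : (H →L[ℂ] H) →ₗ[ℂ] (H →L[ℂ] H)) : Prop :=
  ∀ (n : ℕ) (M : Matrix (Fin n) (Fin n) (H →L[ℂ] H)),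
    MatPos n M → MatPos n (fun i j => E (M i j))

end

/-! Take a minimizing sequence `σₖ` of admissible operators. Since `‖σₖ‖ ≤ tr σₖ` is bounded,
the sesquilinear forms `⟪σₖ x, y⟫` converge along an ultrafilter finer than `atTop` (Tychonoff
on closed discs), and the bounded limit form is given by an operator `T`. Positivity of `T` and
of `id ⊗ T - ρ` passes to the limit (the latter first on the dense span of product vectors), and
the trace is lower semicontinuous under this convergence, so `tr T ≤ lim tr σₖ = Λ(ρ|B)`. -/

section

variable {E : Type*} [NormedAddCommGroup E] [InnerProductSpace ℂ E]

lemma HilbertBasis.hasSum_norm_inner_sq {ι : Type*} (b : HilbertBasis ι ℂ E) (x : E) :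
    HasSum (fun i => ‖⟪b i, x⟫_ℂ‖ ^ 2) (‖x‖ ^ 2) := by
  have h := b.hasSum_inner_mul_inner x x
  have hterm : ∀ i, ⟪x, b i⟫_ℂ * ⟪b i, x⟫_ℂ = ((‖⟪b i, x⟫_ℂ‖ ^ 2 : ℝ) : ℂ) := fun i => by
    rw [← inner_conj_symm x, RCLike.conj_mul]; push_cast; rfl
  rw [funext hterm, inner_self_eq_norm_sq_to_K, ← RCLike.ofReal_pow] at h
  exact (RCLike.hasSum_ofReal ℂ).mp h

lemma ContinuousLinearMap.IsPositive.trAlong_nonneg {ι : Type*} (f : HilbertBasis ι ℂ E)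
    {σ : E →L[ℂ] E} (hσ : σ.IsPositive) : 0 ≤ trAlong f σ :=
  tsum_nonneg fun i => hσ.re_inner_nonneg_right (f i)

lemma ContinuousLinearMap.isPositive_of_inner_nonneg {T : E →L[ℂ] E}
    (h : ∀ x, 0 ≤ ⟪T x, x⟫_ℂ) : T.IsPositive := by
  refine (isPositive_iff_complex T).mpr fun x => ⟨?_, (Complex.nonneg_iff.mp (h x)).1⟩
  exact Complex.ext (by simp) (by simpa using (Complex.nonneg_iff.mp (h x)).2)

lemma ContinuousLinearMap.isPositive_of_dense {T : E →L[ℂ] E} {D : Set E} (hD : Dense D)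
    (h : ∀ z ∈ D, 0 ≤ ⟪T z, z⟫_ℂ) : T.IsPositive :=
  isPositive_of_inner_nonneg <| hD.induction h <|
    isClosed_le continuous_const (T.continuous.inner continuous_id)

variable [CompleteSpace E]

lemma ContinuousLinearMap.norm_sq_le_tsum_norm_adjoint_apply_sq {ι : Type*}
    (f : HilbertBasis ι ℂ E) (s : E →L[ℂ] E)
    (hs : Summable fun i => ‖adjoint s (f i)‖ ^ 2) :
    ‖s‖ ^ 2 ≤ ∑' i, ‖adjoint s (f i)‖ ^ 2 := by
  set S := ∑' i, ‖adjoint s (f i)‖ ^ 2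
  have hS : 0 ≤ S := tsum_nonneg fun i => by positivity
  have hpt : ∀ y, ‖s y‖ ^ 2 ≤ S * ‖y‖ ^ 2 := fun y => by
    rw [← (f.hasSum_norm_inner_sq (s y)).tsum_eq, ← tsum_mul_right]
    refine (f.hasSum_norm_inner_sq _).summable.tsum_le_tsum (fun i => ?_) (hs.mul_right _)
    rw [← adjoint_inner_left, ← mul_pow]
    exact pow_le_pow_left₀ (norm_nonneg _) (norm_inner_le_norm _ _) 2
  have hnorm : ‖s‖ ≤ √S := s.opNorm_le_bound (Real.sqrt_nonneg _) fun y => by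
    rw [← Real.sqrt_sq (norm_nonneg (s y)), ← Real.sqrt_sq (norm_nonneg y), ← Real.sqrt_mul hS]
    exact Real.sqrt_le_sqrt (hpt y)
  calc ‖s‖ ^ 2 ≤ √S ^ 2 := pow_le_pow_left₀ (norm_nonneg _) hnorm 2
    _ = S := Real.sq_sqrt hS

namespace ContinuousLinearMap.IsPositive

variable {σ : E →L[ℂ] E}

lemma absOp_eq (hσ : σ.IsPositive) : absOp σ = σ := by
  rw [absOp, ← star_eq_adjoint, hσ.isSelfAdjoint.star_eq]
  exact CFC.sqrt_mul_self σ ((nonneg_iff_isPositive σ).mpr hσ)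

lemma isTraceClass_iff {ι : Type*} (f : HilbertBasis ι ℂ E) (hσ : σ.IsPositive) :
    IsTraceClass f σ ↔ Summable fun i => RCLike.re ⟪f i, σ (f i)⟫_ℂ := by
  rw [IsTraceClass, hσ.absOp_eq]

lemma norm_le_trAlong {ι : Type*} (f : HilbertBasis ι ℂ E) (hσ : σ.IsPositive)
    (hsum : Summable fun i => RCLike.re ⟪f i, σ (f i)⟫_ℂ) : ‖σ‖ ≤ trAlong f σ := by
  set s := CFC.sqrt σ
  have hs : IsSelfAdjoint s := IsSelfAdjoint.of_nonneg (CFC.sqrt_nonneg σ)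
  have hss : s * s = σ := CFC.sqrt_mul_sqrt_self σ ((nonneg_iff_isPositive σ).mpr hσ)
  have hdiag : ∀ x, ‖adjoint s x‖ ^ 2 = RCLike.re ⟪x, σ x⟫_ℂ := fun x => by
    rw [← hss, mul_apply_eq_comp, ← adjoint_inner_left, ← star_eq_adjoint, hs.star_eq,
      inner_self_eq_norm_sq]
  calc ‖σ‖ = ‖star s * s‖ := by rw [hs.star_eq, hss]
    _ = ‖s‖ ^ 2 := by rw [CStarRing.norm_star_mul_self, sq]
    _ ≤ ∑' i, ‖adjoint s (f i)‖ ^ 2 :=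
      s.norm_sq_le_tsum_norm_adjoint_apply_sq f (by simpa only [hdiag] using hsum)
    _ = trAlong f σ := by simp only [hdiag, trAlong]

end ContinuousLinearMap.IsPositive

lemma exists_tendsto_inner_apply_of_norm_le {α : Type*} (𝒰 : Ultrafilter α)
    (A : α → E →L[ℂ] E) {C : ℝ} (hA : ∀ a, ‖A a‖ ≤ C) :
    ∃ T : E →L[ℂ] E, ∀ x y, Tendsto (fun a => ⟪A a x, y⟫_ℂ) 𝒰 (𝓝 ⟪T x, y⟫_ℂ) := by
  have hlim : ∀ x y, ∃ l ∈ Metric.closedBall (0 : ℂ) (C * ‖x‖ * ‖y‖),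
      Tendsto (fun a => ⟪A a x, y⟫_ℂ) 𝒰 (𝓝 l) := fun x y =>
    (isCompact_closedBall _ _).ultrafilter_le_nhds (𝒰.map _) <| le_principal_iff.mpr <|
      Ultrafilter.mem_map.mpr <| univ_mem' fun a => by
        rw [Set.mem_preimage, mem_closedBall_zero_iff]
        exact (norm_inner_le_norm _ _).trans
          (mul_le_mul_of_nonneg_right ((A a).le_of_opNorm_le (hA a) x) (norm_nonneg y))
  choose B hBnorm hB using hlim
  have eq_B {x y l} (h : Tendsto (fun a => ⟪A a x, y⟫_ℂ) 𝒰 (𝓝 l)) : B x y = l :=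
    tendsto_nhds_unique (hB x y) h
  let B' : E →ₗ⋆[ℂ] E →ₗ[ℂ] ℂ := LinearMap.mk₂'ₛₗ (starRingEnd ℂ) (RingHom.id ℂ) B
    (fun x x' y => eq_B <| by
      simpa only [map_add, add_apply, inner_add_left] using (hB x y).add (hB x' y))
    (fun c x y => eq_B <| by
      simpa only [map_smul, inner_smul_left, smul_eq_mul] using
        (hB x y).const_mul (starRingEnd ℂ c))
    (fun x y y' => eq_B <| by simpa only [inner_add_right] using (hB x y).add (hB x y'))
    (fun c x y => eq_B <| by
      simpa only [inner_smul_right, RingHom.id_apply, smul_eq_mul] using (hB x y).const_mul c)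
  refine ⟨InnerProductSpace.continuousLinearMapOfBilin
    (B'.mkContinuous₂ C fun x y => mem_closedBall_zero_iff.mp (hBnorm x y)), fun x y => ?_⟩
  rw [InnerProductSpace.continuousLinearMapOfBilin_apply]
  exact hB x y

lemma ContinuousLinearMap.IsPositive.isTraceClass_and_trAlong_le_of_tendsto {α : Type*}
    {l : Filter α} [l.NeBot] {ι : Type*} (f : HilbertBasis ι ℂ E) {A : α → E →L[ℂ] E}
    {T : E →L[ℂ] E} {c : ℝ} (hT : T.IsPositive) (hA : ∀ a, (A a).IsPositive)
    (hAtc : ∀ a, IsTraceClass f (A a))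
    (hlim : ∀ x, Tendsto (fun a => ⟪A a x, x⟫_ℂ) l (𝓝 ⟪T x, x⟫_ℂ))
    (htr : Tendsto (fun a => trAlong f (A a)) l (𝓝 c)) :
    IsTraceClass f T ∧ trAlong f T ≤ c := by
  have hpartial (s : Finset ι) : ∑ i ∈ s, RCLike.re ⟪f i, T (f i)⟫_ℂ ≤ c := by
    refine le_of_tendsto_of_tendsto (tendsto_finsetSum s fun i _ => ?_) htr <|
      Eventually.of_forall fun a => (((hA a).isTraceClass_iff f).mp (hAtc a)).sum_le_tsum s
        fun i _ => (hA a).re_inner_nonneg_right (f i)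
    simpa only [inner_re_symm (f i), Function.comp_def] using
      (RCLike.continuous_re.tendsto _).comp (hlim (f i))
  have hsum := summable_of_sum_le (fun i => hT.re_inner_nonneg_right (f i)) hpartial
  exact ⟨(hT.isTraceClass_iff f).mpr hsum, hsum.tsum_le_of_sum_le hpartial⟩

lemma HilbertTensor.tendsto_inner_map_one_apply {HA HB H : Type*}
    [NormedAddCommGroup HA] [InnerProductSpace ℂ HA] [NormedAddCommGroup HB]
    [InnerProductSpace ℂ HB] [NormedAddCommGroup H] [InnerProductSpace ℂ H]
    (TP : HilbertTensor HA HB H) {α : Type*} {l : Filter α} {A : α → HB →L[ℂ] HB}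
    {T : HB →L[ℂ] HB} (hA : ∀ x y, Tendsto (fun a => ⟪A a x, y⟫_ℂ) l (𝓝 ⟪T x, y⟫_ℂ))
    {z w : H} (hz : z ∈ Submodule.span ℂ {z : H | ∃ a b, z = TP.tmul a b})
    (hw : w ∈ Submodule.span ℂ {z : H | ∃ a b, z = TP.tmul a b}) :
    Tendsto (fun a => ⟪TP.map 1 (A a) z, w⟫_ℂ) l (𝓝 ⟪TP.map 1 T z, w⟫_ℂ) := by
  induction hz, hw using Submodule.span_induction₂ with
  | mem_mem z w hz hw =>
    obtain ⟨a, b, rfl⟩ := hz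
    obtain ⟨a', b', rfl⟩ := hw
    simpa only [TP.map_tmul, one_apply_eq_self, TP.inner_tmul] using
      (hA b b').const_mul ⟪a, a'⟫_ℂ
  | zero_left w _ => simpa only [map_zero, inner_zero_left] using tendsto_const_nhds
  | zero_right z _ => simpa only [inner_zero_right] using tendsto_const_nhds
  | add_left z z' w _ _ _ h h' => simpa only [map_add, inner_add_left] using h.add h'
  | add_right z w w' _ _ _ h h' => simpa only [inner_add_right] using h.add h'
  | smul_left c z w _ _ h =>
    simpa only [map_smul, inner_smul_left] using h.const_mul (starRingEnd ℂ c)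
  | smul_right c z w _ _ h => simpa only [inner_smul_right] using h.const_mul c

end

theorem LamB_attained_general
    {HA HB H : Type*} [NormedAddCommGroup HA] [InnerProductSpace ℂ HA]
    [NormedAddCommGroup HB] [InnerProductSpace ℂ HB] [CompleteSpace HB]
    [NormedAddCommGroup H] [InnerProductSpace ℂ H] [CompleteSpace H]
    (TP : HilbertTensor HA HB H)
    {κ : Type*} (f : HilbertBasis κ ℂ HB)
    (ρ : H →L[ℂ] H)
    (hne : ∃ σ : HB →L[ℂ] HB, σ.IsPositive ∧ IsTraceClass f σ ∧ ρ ≤ TP.map 1 σ) :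
    ∃ σ : HB →L[ℂ] HB, σ.IsPositive ∧ IsTraceClass f σ ∧ ρ ≤ TP.map 1 σ ∧
      (trAlong f σ : EReal) = LamB TP f ρ := by
  set traces := {t : ℝ | ∃ σ : HB →L[ℂ] HB, σ.IsPositive ∧ IsTraceClass f σ ∧
    ρ ≤ TP.map 1 σ ∧ t = trAlong f σ}
  have hbdd : BddBelow traces := ⟨0, by rintro _ ⟨σ, hσ, -, -, rfl⟩; exact hσ.trAlong_nonneg f⟩
  obtain ⟨σ₀, hσ₀, hσ₀tc, hρσ₀⟩ := hne
  obtain ⟨t, ht_anti, ht_lim, ht_mem⟩ :=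
    exists_seq_tendsto_sInf (S := traces) ⟨_, σ₀, hσ₀, hσ₀tc, hρσ₀, rfl⟩ hbdd
  choose σ hσ hσtc hρσ hσtr using ht_mem
  obtain ⟨T, hT⟩ := exists_tendsto_inner_apply_of_norm_le (.of atTop) σ (C := t 0) fun k =>
    ((hσ k).norm_le_trAlong f (((hσ k).isTraceClass_iff f).mp (hσtc k))).trans
      ((hσtr k).symm.le.trans (ht_anti (Nat.zero_le k)))
  have hTpos : T.IsPositive := isPositive_of_dense dense_univ fun z _ =>
    ge_of_tendsto' (hT z z) fun k => (hσ k).inner_nonneg_left z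
  have hρT : ρ ≤ TP.map 1 T := isPositive_of_dense TP.dense_span fun z hz =>
    ge_of_tendsto' (by simpa only [sub_apply, inner_sub_left] using
      (TP.tendsto_inner_map_one_apply hT hz hz).sub_const ⟪ρ z, z⟫_ℂ)
      fun k => (hρσ k).inner_nonneg_left z
  obtain ⟨hTtc, hTtr⟩ := hTpos.isTraceClass_and_trAlong_le_of_tendsto f hσ hσtc
    (fun x => hT x x) ((ht_lim.mono_left (Ultrafilter.of_le _)).congr hσtr)
  refine ⟨T, hTpos, hTtc, hρT, ?_⟩
  rw [LamB, eq_comm]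
  refine IsLeast.csInf_eq ⟨⟨T, hTpos, hTtc, hρT, rfl⟩, ?_⟩
  rintro _ ⟨σ', hσ', hσ'tc, hρσ', rfl⟩
  exact EReal.coe_le_coe_iff.mpr (hTtr.trans
    (csInf_le hbdd (show _ ∈ traces from ⟨σ', hσ', hσ'tc, hρσ', rfl⟩)))

/-- If `Λ(ρ_AB|B)` is finite (some admissible `σ` exists), then the
infimum is attained by a positive trace-class `σ̃_B`. -/
theorem LamB_attained
    {HA HB H : Type*} [NormedAddCommGroup HA] [InnerProductSpace ℂ HA]
    [TopologicalSpace.SeparableSpace HA]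
    [NormedAddCommGroup HB] [InnerProductSpace ℂ HB] [CompleteSpace HB]
    [TopologicalSpace.SeparableSpace HB]
    [NormedAddCommGroup H] [InnerProductSpace ℂ H] [CompleteSpace H]
    [TopologicalSpace.SeparableSpace H]
    (TP : HilbertTensor HA HB H)
    {ι κ : Type*} (e : HilbertBasis ι ℂ H) (f : HilbertBasis κ ℂ HB)
    (ρ : H →L[ℂ] H)
    (hρ : ρ.IsPositive) (hρtc : IsTraceClass e ρ) (hρtr : trAlong e ρ = 1)
    (hne : ∃ σ : HB →L[ℂ] HB, σ.IsPositive ∧ IsTraceClass f σ ∧ ρ ≤ TP.map 1 σ) :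
    ∃ σ : HB →L[ℂ] HB, σ.IsPositive ∧ IsTraceClass f σ ∧ ρ ≤ TP.map 1 σ ∧
      (trAlong f σ : EReal) = LamB TP f ρ :=
  LamB_attained_general TP f ρ hne
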